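/- arXiv:1502.02459 — 2 statements merged into one kernel-verified Lean document; each statement's English description precedes it below -/
import Mathlib

section
/- Let (M,d) be a compact metric space, f: M → M a continuous map, and ψ: M → ℝ continuous. Fix ε > 0 and δ ∈ (0,1). Then the function m ↦ P_m^{Kat}(f,ψ,ε) = liminf_{n→∞} (1/n) log N^m(ψ,δ,ε,n), defined on the set of ergodic f-invariant Borel probability measures equipped with the weak* topology, is Borel measurable. -/
open MeasureTheory Filter Set Topology
open scoped ENNReal NNReal

noncomputable section

variable {M : Type*} [MetricSpace M]

/-- The Bowen ball `B_n(x,ε)`. -/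
def bowenBall (f : M → M) (n : ℕ) (x : M) (ε : ℝ) : Set M :=
  {y | ∀ i < n, dist (f^[i] x) (f^[i] y) < ε}

/-- The Birkhoff sum `S_n ψ (x)`. -/
def birkhoff (f : M → M) (ψ : M → ℝ) (n : ℕ) (x : M) : ℝ :=
  ∑ i ∈ Finset.range n, ψ (f^[i] x)

/-- `sup_{y ∈ B_n(x,ε)} S_n ψ (y)`. -/
noncomputable def supBirkhoff (f : M → M) (ψ : M → ℝ) (n : ℕ) (x : M) (ε : ℝ) : ℝ :=
  sSup (birkhoff f ψ n '' bowenBall f n x ε)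

/-- The Carathéodory pre-measure `M(Z,t,ψ,n,ε)`: infimum over finite or countable covers of
`Z` by Bowen balls `B_m(x,ε)` with `m ≥ n` of `∑ exp(-tm + sup_{B_m(x,ε)} S_m ψ)`. -/
noncomputable def presPre (f : M → M) (ψ : M → ℝ) (Z : Set M) (t : ℝ) (n : ℕ) (ε : ℝ) :
    ℝ≥0∞ :=
  ⨅ (C : Set (M × ℕ)) (_ : C.Countable) (_ : ∀ p ∈ C, n ≤ p.2)
    (_ : Z ⊆ ⋃ p ∈ C, bowenBall f p.2 p.1 ε),
    ∑' p : C, ENNReal.ofReal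
      (Real.exp (-(t * (p : M × ℕ).2) + supBirkhoff f ψ (p : M × ℕ).2 (p : M × ℕ).1 ε))

/-- `M(Z,t,ψ,ε) = lim_{n → ∞} M(Z,t,ψ,n,ε)` (the quantity is nondecreasing in `n`). -/
noncomputable def presLim (f : M → M) (ψ : M → ℝ) (Z : Set M) (t : ℝ) (ε : ℝ) : ℝ≥0∞ :=
  ⨆ n : ℕ, presPre f ψ Z t n ε

/-- The topological pressure of `Z` at scale `ε`:
`P(Z,ψ,ε) = inf {t | M(Z,t,ψ,ε) = 0}`. -/
noncomputable def pressureAt (f : M → M) (ψ : M → ℝ) (Z : Set M) (ε : ℝ) : ℝ :=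
  sInf {t : ℝ | presLim f ψ Z t ε = 0}

/-- Generic points of the measure `ν`: points whose empirical measures converge to `ν`
in the weak* topology. -/
def ergGenericPoints (f : M → M) [MeasurableSpace M] (ν : Measure M) : Set M :=
  {x | ∀ g : C(M, ℝ), Tendsto (fun n => birkhoff f g n x / n) atTop (𝓝 (∫ y, g y ∂ν))}

/-- The entropy `H((1/n)·(P ∨ f⁻¹P ∨ ⋯ ∨ f^{-(n-1)}P))` of the `n`-th dynamical refinement of
the finite partition `P`. -/
noncomputable def partH [MeasurableSpace M] (μ : Measure M) (f : M → M) {k : ℕ}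
    (P : Fin k → Set M) (n : ℕ) : ℝ :=
  ∑ a : Fin n → Fin k, Real.negMulLog ((μ (⋂ i : Fin n, f^[(i : ℕ)] ⁻¹' P (a i))).toReal)

/-- The Kolmogorov–Sinai (measure-theoretic) entropy `h_μ(f)`: the supremum over finite
measurable partitions `P` of `lim_n (1/n) H(⋁_{i<n} f^{-i} P)`. -/
noncomputable def ksEntropy [MeasurableSpace M] (f : M → M) (μ : Measure M) : ℝ :=
  sSup {h | ∃ (k : ℕ) (P : Fin k → Set M),
    (∀ i, MeasurableSet (P i)) ∧ Pairwise (Function.onFun Disjoint P) ∧ (⋃ i, P i) = Set.univ ∧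
    h = Filter.atTop.liminf (fun n => partH μ f P n / n)}

/-- Katok's quantity `N^μ(ψ,δ,ε,n)`: the infimum of `∑_{x ∈ S} exp (S_n ψ (x))` over finite
sets `S` which `(n,ε)`-span some set `Z` with `μ(Z) > 1 - δ`. -/
noncomputable def katokN [MeasurableSpace M] (f : M → M) (μ : Measure M) (ψ : M → ℝ)
    (δ ε : ℝ) (n : ℕ) : ℝ :=
  sInf {r | ∃ (S : Finset M) (Z : Set M), ENNReal.ofReal (1 - δ) < μ Z ∧
    (Z ⊆ ⋃ x ∈ S, bowenBall f n x ε) ∧ r = ∑ x ∈ S, Real.exp (birkhoff f ψ n x)}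

/-- Katok's measure-theoretic pressure at scale `ε`:
`P_μ^{Kat}(f,ψ,ε) = liminf_{n→∞} (1/n) log N^μ(ψ,δ,ε,n)`. -/
noncomputable def katokP [MeasurableSpace M] (f : M → M) (μ : Measure M) (ψ : M → ℝ)
    (δ ε : ℝ) : ℝ :=
  Filter.atTop.liminf (fun n => Real.log (katokN f μ ψ δ ε n) / n)

end

/-!
Upper semicontinuity of `μ ↦ N^μ(ψ,δ,ε,n)` in the weak* topology makes each term of the liminf
measurable. The infimum defining `N^μ` may be taken over the open sets `Z = ⋃_{x ∈ S} B_n(x,ε)`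
alone, and `μ(U) > 1 - δ` is an open condition on `μ` for open `U` by the portmanteau theorem.
-/

section Bowen

variable {M : Type*} [MetricSpace M] {f : M → M}

theorem isOpen_bowenBall (hf : Continuous f) (n : ℕ) (x : M) (ε : ℝ) :
    IsOpen (bowenBall f n x ε) := by
  have h : bowenBall f n x ε = ⋂ i ∈ Finset.range n, f^[i] ⁻¹' Metric.ball (f^[i] x) ε := by
    ext y
    simp [bowenBall, Metric.mem_ball, dist_comm]
  rw [h]
  exact isOpen_biInter_finset fun i _ => Metric.isOpen_ball.preimage (hf.iterate i)

theorem mem_bowenBall_self (n : ℕ) (x : M) {ε : ℝ} (hε : 0 < ε) : x ∈ bowenBall f n x ε :=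
  fun i _ => by simpa using hε

theorem exists_finset_iUnion_bowenBall_eq_univ [CompactSpace M] (hf : Continuous f) (n : ℕ)
    {ε : ℝ} (hε : 0 < ε) : ∃ S : Finset M, ⋃ x ∈ S, bowenBall f n x ε = univ := by
  obtain ⟨S, hS⟩ := isCompact_univ.elim_finite_subcover (fun x => bowenBall f n x ε)
    (fun x => isOpen_bowenBall hf n x ε)
    (fun x _ => mem_iUnion.2 ⟨x, mem_bowenBall_self n x hε⟩)
  exact ⟨S, univ_subset_iff.1 hS⟩

theorem katokN_lt_iff [CompactSpace M] [MeasurableSpace M] (hf : Continuous f) (ψ : M → ℝ)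
    {δ ε : ℝ} (hε : 0 < ε) (n : ℕ) {μ : Measure M} (hμ : ENNReal.ofReal (1 - δ) < μ univ)
    {t : ℝ} :
    katokN f μ ψ δ ε n < t ↔ ∃ S : Finset M, ∑ x ∈ S, Real.exp (birkhoff f ψ n x) < t ∧
      ENNReal.ofReal (1 - δ) < μ (⋃ x ∈ S, bowenBall f n x ε) := by
  have hbdd : BddBelow {r | ∃ (S : Finset M) (Z : Set M), ENNReal.ofReal (1 - δ) < μ Z ∧
      (Z ⊆ ⋃ x ∈ S, bowenBall f n x ε) ∧ r = ∑ x ∈ S, Real.exp (birkhoff f ψ n x)} := by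
    refine ⟨0, ?_⟩
    rintro _ ⟨S, Z, -, -, rfl⟩
    exact Finset.sum_nonneg fun x _ => (Real.exp_pos _).le
  constructor
  · intro h
    have hne : {r | ∃ (S : Finset M) (Z : Set M), ENNReal.ofReal (1 - δ) < μ Z ∧
        (Z ⊆ ⋃ x ∈ S, bowenBall f n x ε) ∧
        r = ∑ x ∈ S, Real.exp (birkhoff f ψ n x)}.Nonempty := by
      obtain ⟨S, hS⟩ := exists_finset_iUnion_bowenBall_eq_univ hf n hε
      exact ⟨_, S, univ, hμ, hS.ge, rfl⟩
    obtain ⟨_, ⟨S, Z, hZ, hZS, rfl⟩, hlt⟩ := exists_lt_of_csInf_lt hne h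
    exact ⟨S, hlt, hZ.trans_le (measure_mono hZS)⟩
  · rintro ⟨S, hlt, hS⟩
    exact (csInf_le hbdd ⟨S, _, hS, subset_rfl, rfl⟩).trans_lt hlt

end Bowen

theorem MeasureTheory.ProbabilityMeasure.lowerSemicontinuous_apply_of_isOpen {Ω : Type*}
    [MeasurableSpace Ω] [TopologicalSpace Ω] [OpensMeasurableSpace Ω] [HasOuterApproxClosed Ω]
    {U : Set Ω} (hU : IsOpen U) :
    LowerSemicontinuous fun μ : ProbabilityMeasure Ω => (μ : Measure Ω) U := fun μ _ hμ =>
  eventually_lt_of_lt_liminf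
    (hμ.trans_le (ProbabilityMeasure.le_liminf_measure_open_of_tendsto tendsto_id hU))

theorem upperSemicontinuous_katokN {M : Type*} [MetricSpace M] [CompactSpace M]
    [MeasurableSpace M] [OpensMeasurableSpace M] {f : M → M} (hf : Continuous f) (ψ : M → ℝ)
    {δ ε : ℝ} (hδ : 0 < δ) (hε : 0 < ε) (n : ℕ) :
    UpperSemicontinuous fun μ : ProbabilityMeasure M => katokN f μ ψ δ ε n := by
  have hμ (μ : ProbabilityMeasure M) : ENNReal.ofReal (1 - δ) < (μ : Measure M) univ := by
    rw [measure_univ]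
    exact ENNReal.ofReal_lt_one.2 (by linarith)
  intro μ t ht
  obtain ⟨S, hSt, hS⟩ := (katokN_lt_iff hf ψ hε n (hμ μ)).1 ht
  have hopen := ProbabilityMeasure.lowerSemicontinuous_apply_of_isOpen
    (isOpen_biUnion fun x (_ : x ∈ S) => isOpen_bowenBall hf n x ε)
  filter_upwards [hopen μ _ hS] with ν hν
  exact (katokN_lt_iff hf ψ hε n (hμ ν)).2 ⟨S, hSt, hν⟩

theorem katokP_measurable_general {M : Type*} [MetricSpace M] [CompactSpace M]
    [MeasurableSpace M] [BorelSpace M]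
    (f : M → M) (hf : Continuous f) (ψ : M → ℝ)
    (ε δ : ℝ) (hε : 0 < ε) (hδ : δ ∈ Set.Ioo (0 : ℝ) 1) :
    @Measurable {m : ProbabilityMeasure M // Ergodic f (m : Measure M)} ℝ
      (borel {m : ProbabilityMeasure M // Ergodic f (m : Measure M)}) _
      (fun m => katokP f (m : Measure M) ψ δ ε) := by
  let := borel {m : ProbabilityMeasure M // Ergodic f (m : Measure M)}
  have : BorelSpace {m : ProbabilityMeasure M // Ergodic f (m : Measure M)} := ⟨rfl⟩
  refine Measurable.liminf fun n => ((Real.measurable_log.comp ?_).div_const _)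
  exact ((upperSemicontinuous_katokN hf ψ hδ.1 hε n).comp continuous_subtype_val).measurable

/-- For fixed `ε > 0` and `δ ∈ (0,1)`, the map
`m ↦ P_m^{Kat}(f,ψ,ε) = liminf_n (1/n) log N^m(ψ,δ,ε,n)`, defined on the set of ergodic
`f`-invariant Borel probability measures with the weak* topology, is Borel measurable. -/
theorem katokP_measurable {M : Type*} [MetricSpace M] [CompactSpace M]
    [MeasurableSpace M] [BorelSpace M]
    (f : M → M) (hf : Continuous f) (ψ : M → ℝ) (hψ : Continuous ψ)
    (ε δ : ℝ) (hε : 0 < ε) (hδ : δ ∈ Set.Ioo (0 : ℝ) 1) :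
    @Measurable {m : ProbabilityMeasure M // Ergodic f (m : Measure M)} ℝ
      (borel {m : ProbabilityMeasure M // Ergodic f (m : Measure M)}) _
      (fun m => katokP f (m : Measure M) ψ δ ε) :=
  katokP_measurable_general f hf ψ ε δ hε hδ
end

section
/- Let f: M → M be a C¹ diffeomorphism of a compact Riemannian manifold and let μ be an f-invariant Borel probability measure. Let Γ ⊆ M be a measurable set with μ(Γ) > 0 and put Ω = ∪_{n∈ℤ} f^n(Γ). Take γ > 0. Then there exists a measurable function N₀: Ω → ℕ such that for μ-almost every x ∈ Ω, every integer n ≥ N₀(x) and every t ∈ [0,1], there is some l ∈ {0,1,…,n} such that f^l(x) ∈ Γ and |(l/n) − t| < γ. -/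
/-!
By Poincaré recurrence, transported along the orbit by the measure-preserving powers `f ^ n`,
almost every point of `Ω` visits `Γ` infinitely often. The sets of points of `Γ` whose first
return takes more than `k` steps have total measure at most `1` (Kac), so by Borel–Cantelli,
for a fixed `c ≥ 1` and a.e. `x`, every late enough visit at a time `m` is followed by another
one within `m / c` steps. With `1 / c ≤ γ`, the visit times up to `n` are then `γ n`-dense in
`[0, n]` once `n` is large.
-/

open MeasureTheory Filter Set Manifold
open scoped ENNReal

theorem ENNReal.tsum_comp_div (a : ℕ → ℝ≥0∞) (c : ℕ) [NeZero c] :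
    ∑' m, a (m / c) = c * ∑' k, a k :=
  calc ∑' m, a (m / c) = ∑' p : ℕ × Fin c, a p.1 := by
        simpa using (Nat.divModEquiv c).tsum_eq fun p => a p.1
    _ = ∑' k, ∑' _ : Fin c, a k := ENNReal.tsum_prod (f := fun k _ => a k)
    _ = c * ∑' k, a k := by simp [ENNReal.tsum_mul_left]

theorem measurable_sInf_setOf {α : Type*} [MeasurableSpace α] {p : α → ℕ → Prop}
    (hp : ∀ n, MeasurableSet {x | p x n}) : Measurable fun x => sInf {n | p x n} := by
  classical
  refine measurable_to_countable' fun k => ?_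
  -- `sInf ∅ = 0` accounts for the second piece.
  have hpre : (fun x => sInf {n | p x n}) ⁻¹' {k} =
      {x | p x k ∧ ∀ j < k, ¬p x j} ∪ {x | k = 0 ∧ ∀ n, ¬p x n} := by
    ext x
    by_cases hx : ∃ n, p x n
    · have hk : sInf {n | p x n} = k ↔ p x k ∧ ∀ j < k, ¬p x j :=
        (Nat.sInf_def hx).symm ▸ Nat.find_eq_iff hx
      simp [hk, hx]
    · simp only [not_exists] at hx
      simp [hx, eq_comm]
  rw [hpre]
  have hnot : ∀ n, MeasurableSet {x | ¬p x n} := fun n => (hp n).compl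
  simp only [ofPred_and, ofPred_forall]
  exact ((hp k).inter (.iInter fun j => .iInter fun _ => hnot j)).union
    ((MeasurableSet.const _).inter (.iInter hnot))

theorem MeasureTheory.MeasurePreserving.ae_frequently_mem_of_mem_iUnion_zpow_image
    {α : Type*} [MeasurableSpace α] {μ : Measure α} [IsFiniteMeasure μ] {e : α ≃ᵐ α}
    (he : MeasurePreserving e μ μ) {s : Set α} (hs : NullMeasurableSet s μ) :
    ∀ᵐ x ∂μ, x ∈ ⋃ n : ℤ, ⇑(e.toEquiv ^ n) '' s → ∃ᶠ m in atTop, e^[m] x ∈ s := by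
  have forward := he.conservative.ae_forall_image_mem_imp_frequently_image_mem hs
  have backward : ∀ᵐ x ∂μ, ∀ k, e.symm^[k] x ∈ s → ∃ᶠ m in atTop, e^[m] x ∈ s := by
    refine ae_all_iff.2 fun k => ?_
    filter_upwards [((he.symm e).iterate k).quasiMeasurePreserving.ae
      (he.conservative.ae_mem_imp_frequently_image_mem hs)] with x hx hk
    have hrec := hx hk
    rw [← map_add_atTop_eq_nat k, frequently_map] at hrec
    refine hrec.mono fun m hm => ?_
    rwa [Function.iterate_add_apply, Function.RightInverse.iterate e.apply_symm_apply] at hm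
  filter_upwards [forward, backward] with x hfwd hbwd hx
  obtain ⟨n, hn⟩ := mem_iUnion.1 hx
  rw [mem_image_equiv] at hn
  obtain ⟨k, rfl | rfl⟩ := n.eq_nat_or_neg
  · rw [zpow_natCast, ← Equiv.Perm.inv_def, ← inv_pow, Equiv.Perm.coe_pow] at hn
    exact hbwd k hn
  · rw [zpow_neg, zpow_natCast, ← Equiv.Perm.inv_def, inv_inv, Equiv.Perm.coe_pow] at hn
    exact hfwd k hn

section Returns

variable {α : Type*} {T : α → α} {s : Set α}

def notHitBefore (T : α → α) (s : Set α) (k : ℕ) : Set α :=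
  {x | ∀ j < k, T^[j] x ∉ s}

theorem notHitBefore_succ (k : ℕ) :
    notHitBefore T s (k + 1) = sᶜ ∩ T ⁻¹' notHitBefore T s k := by
  ext x
  simp only [notHitBefore, mem_ofPred_eq, mem_inter_iff, mem_compl_iff, mem_preimage]
  rw [Nat.forall_lt_succ_left, Function.iterate_zero_apply]
  simp only [Function.iterate_succ_apply]

variable [MeasurableSpace α] {μ : Measure α}

theorem measurableSet_notHitBefore (hT : Measurable T) (hs : MeasurableSet s) (k : ℕ) :
    MeasurableSet (notHitBefore T s k) := by
  simp only [notHitBefore, ofPred_forall]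
  exact .iInter fun j => .iInter fun _ => (hT.iterate j) hs.compl

/-- Kac's inequality: `s ∩ T ⁻¹' notHitBefore T s k` is the set of points of `s` whose first
return to `s` takes more than `k` steps. -/
theorem MeasureTheory.MeasurePreserving.tsum_measure_inter_preimage_notHitBefore_le
    (hT : MeasurePreserving T μ μ) (hs : MeasurableSet s) :
    ∑' k, μ (s ∩ T ⁻¹' notHitBefore T s k) ≤ μ univ := by
  have hstep (k : ℕ) : μ (s ∩ T ⁻¹' notHitBefore T s k) + μ (notHitBefore T s (k + 1)) =
      μ (notHitBefore T s k) := by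
    rw [notHitBefore_succ, ← hT.measure_preimage
      (measurableSet_notHitBefore hT.measurable hs k).nullMeasurableSet, inter_comm s,
      inter_comm sᶜ, ← sdiff_eq, measure_inter_add_sdiff _ hs]
  have htelescope (K : ℕ) : ∑ k ∈ Finset.range K, μ (s ∩ T ⁻¹' notHitBefore T s k) +
      μ (notHitBefore T s K) = μ univ := by
    induction K with
    | zero => simp [notHitBefore]
    | succ K ih => rw [Finset.sum_range_succ, add_assoc, hstep, ih]
  rw [ENNReal.tsum_eq_iSup_nat]
  exact iSup_le fun K => (htelescope K).le.trans' le_self_add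

theorem MeasureTheory.MeasurePreserving.ae_eventually_exists_return_le [IsFiniteMeasure μ]
    (hT : MeasurePreserving T μ μ) (hs : MeasurableSet s) (c : ℕ) [NeZero c] :
    ∀ᵐ x ∂μ, ∀ᶠ m in atTop, T^[m] x ∈ s → ∃ m' ∈ Ioc m (m + m / c), T^[m'] x ∈ s := by
  have hsum : ∑' m, μ (T^[m] ⁻¹' (s ∩ T ⁻¹' notHitBefore T s (m / c))) ≠ ∞ := by
    have hmeas (k : ℕ) : MeasurableSet (s ∩ T ⁻¹' notHitBefore T s k) :=
      hs.inter (hT.measurable (measurableSet_notHitBefore hT.measurable hs k))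
    simp_rw [fun m => (hT.iterate m).measure_preimage (hmeas (m / c)).nullMeasurableSet]
    rw [ENNReal.tsum_comp_div (fun k => μ (s ∩ T ⁻¹' notHitBefore T s k))]
    exact ENNReal.mul_ne_top (ENNReal.natCast_ne_top c)
      (ne_top_of_le_ne_top (measure_ne_top μ univ)
        (hT.tsum_measure_inter_preimage_notHitBefore_le hs))
  filter_upwards [ae_eventually_notMem hsum] with x hx
  refine hx.mono fun m hm hmem => ?_
  simp only [mem_preimage, mem_inter_iff, notHitBefore, mem_ofPred_eq, not_and, not_forall,
    not_not] at hm
  obtain ⟨j, hj, hjs⟩ := hm hmem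
  refine ⟨j + 1 + m, ⟨by omega, by omega⟩, ?_⟩
  rwa [Function.iterate_add_apply, Function.iterate_succ_apply]

end Returns

theorem Nat.exists_le_lt_add_div_of_gaps {V : ℕ → Prop} {c m₀ s : ℕ} (h₀ : V m₀)
    (hgap : ∀ m ≥ m₀, V m → ∃ m' ∈ Ioc m (m + m / c), V m') (hs : m₀ ≤ s) :
    ∃ l, V l ∧ l ≤ s ∧ s < l + l / c := by
  classical
  set l := Nat.findGreatest (fun l => m₀ ≤ l ∧ V l) s
  have hl : m₀ ≤ l ∧ V l := Nat.findGreatest_spec (P := fun l => m₀ ≤ l ∧ V l) hs ⟨le_rfl, h₀⟩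
  obtain ⟨m', ⟨hlm', hm'⟩, hVm'⟩ := hgap l hl.1 hl.2
  have hsm' : s < m' := by
    by_contra! hm's
    exact Nat.findGreatest_is_greatest hlm' hm's ⟨hl.1.trans hlm'.le, hVm'⟩
  exact ⟨l, hl.2, Nat.findGreatest_le s, by omega⟩

theorem exists_near_ratio_of_last_visit {V : ℕ → Prop} {c m₀ n : ℕ} {γ t : ℝ}
    (hlast : ∀ s ≥ m₀, ∃ l, V l ∧ l ≤ s ∧ s < l + l / c) (hc : 1 ≤ γ * c) (hm₀n : m₀ ≤ n)
    (hn : m₀ < γ * n) (ht : t ∈ Icc (0 : ℝ) 1) :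
    ∃ l ≤ n, V l ∧ |(l : ℝ) / n - t| < γ := by
  have hγ : 0 < γ := pos_of_mul_pos_left (one_pos.trans_le hc) c.cast_nonneg
  have hc₀ : (0 : ℝ) < c := pos_of_mul_pos_right (one_pos.trans_le hc) hγ.le
  have hn₀ : (0 : ℝ) < n := pos_of_mul_pos_right (m₀.cast_nonneg.trans_lt hn) hγ.le
  have htn₀ : 0 ≤ t * n := mul_nonneg ht.1 hn₀.le
  obtain ⟨l, hVl, hls, hsl⟩ := hlast (max m₀ ⌊t * n⌋₊) (le_max_left _ _)
  have hsn : max m₀ ⌊t * n⌋₊ ≤ n :=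
    max_le hm₀n (Nat.floor_le_of_le (mul_le_of_le_one_left hn₀.le ht.2))
  refine ⟨l, hls.trans hsn, hVl, ?_⟩
  have hl_le : (l : ℝ) ≤ m₀ + t * n := calc
    (l : ℝ) ≤ (m₀ + ⌊t * n⌋₊ : ℕ) :=
      Nat.cast_le.2 (hls.trans (max_le_add_of_nonneg (by omega) (by omega)))
    _ ≤ m₀ + t * n := by push_cast; linarith [Nat.floor_le htn₀]
  have htn_lt : t * n < l + n / c := calc
    t * n < ⌊t * n⌋₊ + 1 := Nat.lt_floor_add_one _
    _ ≤ (l + l / c : ℕ) := by exact_mod_cast (le_max_right m₀ _).trans_lt hsl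
    _ ≤ l + (l : ℝ) / c := by push_cast; linarith [Nat.cast_div_le (m := l) (n := c) (α := ℝ)]
    _ ≤ l + n / c := by gcongr; exact_mod_cast hls.trans hsn
  have hnc : (n : ℝ) / c ≤ γ * n := by
    rw [div_le_iff₀ hc₀]
    nlinarith
  rw [show (l : ℝ) / n - t = (l - t * n) / n by field_simp, abs_div, abs_of_pos hn₀,
    div_lt_iff₀ hn₀, abs_sub_lt_iff]
  constructor <;> linarith

theorem eventually_exists_near_ratio {V : ℕ → Prop} {c : ℕ} {γ : ℝ} (hγ : 0 < γ)
    (hc : 1 ≤ γ * c) (hV : ∃ᶠ m in atTop, V m)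
    (hgap : ∀ᶠ m in atTop, V m → ∃ m' ∈ Ioc m (m + m / c), V m') :
    ∀ᶠ n in atTop, ∀ t ∈ Icc (0 : ℝ) 1, ∃ l ≤ n, V l ∧ |(l : ℝ) / n - t| < γ := by
  obtain ⟨M, hM⟩ := eventually_atTop.1 hgap
  obtain ⟨m₀, hm₀, h₀⟩ := frequently_atTop.1 hV M
  have hlast (s : ℕ) (hs : m₀ ≤ s) : ∃ l, V l ∧ l ≤ s ∧ s < l + l / c :=
    Nat.exists_le_lt_add_div_of_gaps h₀ (fun m hm => hM m (hm₀.trans hm)) hs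
  filter_upwards [eventually_ge_atTop m₀,
    (tendsto_natCast_atTop_atTop.const_mul_atTop hγ).eventually_gt_atTop (m₀ : ℝ)]
    with n hm₀n hn t ht
  exact exists_near_ratio_of_last_visit hlast hc hm₀n hn ht

theorem measurableSet_setOf_exists_near_ratio {α : Type*} [MeasurableSpace α] {A : ℕ → Set α}
    (hA : ∀ l, MeasurableSet (A l)) (γ : ℝ) (n : ℕ) :
    MeasurableSet {x | ∀ t ∈ Icc (0 : ℝ) 1, ∃ l ≤ n, x ∈ A l ∧ |(l : ℝ) / n - t| < γ} := by
  -- The condition only depends on the finitely many events `x ∈ A l`, `l ≤ n`.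
  have hpattern : Measurable fun x (i : Fin (n + 1)) => x ∈ A i :=
    measurable_pi_lambda _ fun i => measurableSet_setOfPred.1 (hA i)
  convert hpattern ({v : Fin (n + 1) → Prop | ∀ t ∈ Icc (0 : ℝ) 1,
    ∃ i, v i ∧ |(i : ℝ) / n - t| < γ}.to_countable.measurableSet) using 1
  ext x
  simp [Fin.exists_iff, and_assoc]

theorem visits_at_prescribed_frequency_general {d : ℕ} {M : Type*} [MetricSpace M]
    [ChartedSpace (EuclideanSpace ℝ (Fin d)) M]
    [MeasurableSpace M] [BorelSpace M]
    (f : Diffeomorph (𝓡 d) (𝓡 d) M M 1)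
    (μ : Measure M) [IsProbabilityMeasure μ] (hf : MeasurePreserving f μ μ)
    (Γ : Set M) (hΓ : MeasurableSet Γ)
    (γ : ℝ) (hγ : 0 < γ) :
    ∃ N₀ : M → ℕ, Measurable N₀ ∧
      ∀ᵐ x ∂μ, x ∈ ⋃ n : ℤ, ⇑(f.toEquiv ^ n) '' Γ →
        ∀ n : ℕ, N₀ x ≤ n → ∀ t ∈ Set.Icc (0 : ℝ) 1,
          ∃ l ≤ n, (⇑f)^[l] x ∈ Γ ∧ |((l : ℝ) / (n : ℝ)) - t| < γ := by
  obtain ⟨c, hc⟩ : ∃ c : ℕ, 1 ≤ γ * c := by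
    obtain ⟨c, hc⟩ := exists_nat_ge γ⁻¹
    exact ⟨c, (inv_le_iff_one_le_mul₀' hγ).1 hc⟩
  have : NeZero c := ⟨by rintro rfl; norm_num at hc⟩
  have he : MeasurePreserving f.toHomeomorph.toMeasurableEquiv μ μ := hf
  let good (x : M) (n : ℕ) : Prop :=
    ∀ t ∈ Icc (0 : ℝ) 1, ∃ l ≤ n, f^[l] x ∈ Γ ∧ |(l : ℝ) / n - t| < γ
  have hgood (n : ℕ) : MeasurableSet {x | good x n} :=
    measurableSet_setOf_exists_near_ratio (fun l => hf.measurable.iterate l hΓ) γ n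
  refine ⟨fun x => sInf {N | ∀ n ≥ N, good x n}, measurable_sInf_setOf fun N =>
    measurableSet_setOfPred.2 <| .forall fun n => measurable_const.imp <|
      measurableSet_setOfPred.1 (hgood n), ?_⟩
  filter_upwards [he.ae_frequently_mem_of_mem_iUnion_zpow_image hΓ.nullMeasurableSet,
    hf.ae_eventually_exists_return_le hΓ c] with x hrec hgap hx
  obtain ⟨N, hN⟩ := eventually_atTop.1 (eventually_exists_near_ratio hγ hc (hrec hx) hgap)
  exact Nat.sInf_mem (s := {N | ∀ n ≥ N, good x n}) ⟨N, hN⟩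

/-- Let `f` be a `C¹` diffeomorphism of a compact Riemannian manifold `M`
(formalized as a compact metric space with a smooth structure modelled on `ℝ^d`), `μ` an
`f`-invariant Borel probability measure, `Γ` a measurable set with `μ(Γ) > 0`, and
`Ω = ⋃_{n ∈ ℤ} f^n(Γ)`.  For every `γ > 0` there is a measurable `N₀` such that for a.e.
`x ∈ Ω`, every `n ≥ N₀(x)` and every `t ∈ [0,1]` there is `l ∈ {0,…,n}` with `f^l(x) ∈ Γ`
and `|l/n − t| < γ`. -/
theorem visits_at_prescribed_frequency {d : ℕ} {M : Type*} [MetricSpace M] [CompactSpace M]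
    [ChartedSpace (EuclideanSpace ℝ (Fin d)) M] [IsManifold (𝓡 d) (⊤ : ℕ∞) M]
    [MeasurableSpace M] [BorelSpace M]
    (f : Diffeomorph (𝓡 d) (𝓡 d) M M 1)
    (μ : Measure M) [IsProbabilityMeasure μ] (hf : MeasurePreserving f μ μ)
    (Γ : Set M) (hΓ : MeasurableSet Γ) (hΓpos : 0 < μ Γ)
    (γ : ℝ) (hγ : 0 < γ) :
    ∃ N₀ : M → ℕ, Measurable N₀ ∧
      ∀ᵐ x ∂μ, x ∈ ⋃ n : ℤ, ⇑(f.toEquiv ^ n) '' Γ →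
        ∀ n : ℕ, N₀ x ≤ n → ∀ t ∈ Set.Icc (0 : ℝ) 1,
          ∃ l ≤ n, (⇑f)^[l] x ∈ Γ ∧ |((l : ℝ) / (n : ℝ)) - t| < γ :=
  visits_at_prescribed_frequency_general f μ hf Γ hΓ γ hγ
end
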